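/- Suppose h_A and h_B are (families indexed by m,n of) real quantities satisfying h_A = (1 + u(h_A,h_B))(1 + δ(h_A))^{2m} z_A and h_B = (1 + u(h_B,h_A))(1 + δ(h_B))^{2n} z_B, where u and δ are analytic near 0 with u(0,0) = 0, δ(0) = 0, z_A = ξ∞²λ^{2m}, z_B = ξ∞²λ^{2n}, λ ∈ (0,1), and h_A, h_B → 0 as m,n → ∞. Then h_A = z_A + o(z_A + z_B) and h_B = z_B + o(z_A + z_B) as m, n → ∞. -/

import Mathlib

/-! A priori the factor `(1 + δ(h))^(2k)` might cancel the decay of `z = ξ∞² λ^(2k)`, so one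
first bootstraps: once `(1 + δ(h))² λ ≤ 1`, the equation gives `h = O(λ^k)`. As `δ(h) = O(h)`, this
forces `k δ(h) → 0`, and then `(1 + δ(h))^(2k) → 1` by squeezing it between `1 + 2k δ(h)`
(Bernoulli) and `exp (2k δ(h))`. Hence `h = (1 + o(1)) z`, and `z_A, z_B ≤ z_A + z_B`. -/

open Asymptotics Filter Topology

section

variable {α : Type*} {l : Filter α}

lemma tendsto_one_add_pow_of_tendsto_mul {a : α → ℝ} {k : α → ℕ}
    (ha : Tendsto a l (𝓝 0)) (hka : Tendsto (fun x => (k x : ℝ) * a x) l (𝓝 0)) :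
    Tendsto (fun x => (1 + a x) ^ k x) l (𝓝 1) := by
  have hlower : Tendsto (fun x => 1 + (k x : ℝ) * a x) l (𝓝 1) := by
    simpa using hka.const_add 1
  have hupper : Tendsto (fun x => Real.exp ((k x : ℝ) * a x)) l (𝓝 1) := by
    simpa [Function.comp_def] using (Real.continuous_exp.tendsto 0).comp hka
  have ha_ge : ∀ᶠ x in l, -1 < a x := ha.eventually_const_lt (by norm_num)
  refine tendsto_of_tendsto_of_tendsto_of_le_of_le' hlower hupper ?_ ?_
  · filter_upwards [ha_ge] with x hx using one_add_mul_le_pow (by linarith) _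
  · filter_upwards [ha_ge] with x hx
    calc (1 + a x) ^ k x ≤ Real.exp (a x) ^ k x :=
          pow_le_pow_left₀ (by linarith) (by linarith [Real.add_one_le_exp (a x)]) _
      _ = Real.exp ((k x : ℝ) * a x) := (Real.exp_nat_mul _ _).symm

lemma isBigO_pow_of_eq_mul_pow {H v d : α → ℝ} {k : α → ℕ} {c lam : ℝ} (hlam : |lam| < 1)
    (hv : Tendsto v l (𝓝 0)) (hd : Tendsto d l (𝓝 0))
    (heq : ∀ x, H x = (1 + v x) * (1 + d x) ^ (2 * k x) * (c * lam ^ (2 * k x))) :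
    H =O[l] fun x => lam ^ k x := by
  have hprefactor : (fun x => (1 + v x) * c) =O[l] fun _ => (1 : ℝ) :=
    ((hv.const_add 1).mul_const c).isBigO_one ℝ
  have hbase : Tendsto (fun x => ‖(1 + d x) ^ 2 * lam‖) l (𝓝 |lam|) := by
    simpa using (((hd.const_add 1).pow 2).mul_const lam).norm
  have hgrowth : (fun x => ((1 + d x) ^ 2 * lam) ^ k x) =O[l] fun _ => (1 : ℝ) := by
    refine IsBigO.of_bound' ?_
    filter_upwards [hbase.eventually_lt_const hlam] with x hx
    simpa [norm_pow] using pow_le_one₀ (norm_nonneg _) hx.le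
  refine ((hprefactor.mul hgrowth).mul (isBigO_refl (fun x => lam ^ k x) l)).congr' ?_ ?_
  · filter_upwards with x
    rw [heq x, pow_mul, pow_mul, mul_pow, sq lam, mul_pow]
    ring
  · filter_upwards with x
    ring

theorem isLittleO_sub_of_eq_mul_pow {H v : α → ℝ} {δ : ℝ → ℝ} {k : α → ℕ} {c lam : ℝ}
    (hlam : |lam| < 1) (hk : Tendsto k l atTop) (hδ : DifferentiableAt ℝ δ 0)
    (hδ0 : δ 0 = 0)
    (hv : Tendsto v l (𝓝 0)) (hH : Tendsto H l (𝓝 0))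
    (heq : ∀ x, H x = (1 + v x) * (1 + δ (H x)) ^ (2 * k x) * (c * lam ^ (2 * k x))) :
    (fun x => H x - c * lam ^ (2 * k x)) =o[l] fun x => c * lam ^ (2 * k x) := by
  have hd : Tendsto (fun x => δ (H x)) l (𝓝 0) := hδ0 ▸ hδ.continuousAt.tendsto.comp hH
  have hδH : (fun x => δ (H x)) =O[l] H :=
    (by simpa [hδ0] using hδ.isBigO_sub : (fun y => δ y) =O[𝓝 0] fun y => y).comp_tendsto hH
  have hkH : Tendsto (fun x => (k x : ℝ) * H x) l (𝓝 0) :=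
    ((isBigO_refl (fun x => (k x : ℝ)) l).mul
      (isBigO_pow_of_eq_mul_pow hlam hv hd heq)).trans_tendsto
        ((tendsto_self_mul_const_pow_of_abs_lt_one hlam).comp hk)
  have hkd : Tendsto (fun x => ((2 * k x : ℕ) : ℝ) * δ (H x)) l (𝓝 0) := by
    have := ((isBigO_refl (fun x => (k x : ℝ)) l).mul hδH).trans_tendsto hkH
    simpa [mul_assoc] using this.const_mul 2
  have hfactor : Tendsto (fun x => (1 + v x) * (1 + δ (H x)) ^ (2 * k x) - 1) l (𝓝 0) := by
    simpa using ((hv.const_add 1).mul (tendsto_one_add_pow_of_tendsto_mul hd hkd)).sub_const 1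
  have hsmall := ((isLittleO_one_iff ℝ).2 hfactor).mul_isBigO
    (isBigO_refl (fun x => c * lam ^ (2 * k x)) l)
  exact (hsmall.congr_left fun x => by linear_combination -heq x).congr_right fun x => one_mul _

lemma isBigO_add_of_nonneg {f g : α → ℝ} (hf : 0 ≤ f) (hg : 0 ≤ g) : f =O[l] (f + g) :=
  isBigO_of_le _ fun x => by
    simpa [abs_of_nonneg (hf x), abs_of_nonneg (add_nonneg (hf x) (hg x))] using hg x

end

theorem stmt_16_general (xiInf lam : ℝ) (hlam : lam ∈ Set.Ioo (0 : ℝ) 1)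
    (u : ℝ × ℝ → ℝ) (δ : ℝ → ℝ)
    (hu : AnalyticAt ℝ u (0, 0)) (hu0 : u (0, 0) = 0)
    (hδ : AnalyticAt ℝ δ 0) (hδ0 : δ 0 = 0)
    (hA hB : ℕ → ℕ → ℝ) (zA zB : ℕ → ℝ)
    (hzA : ∀ m, zA m = xiInf ^ 2 * lam ^ (2 * m))
    (hzB : ∀ n, zB n = xiInf ^ 2 * lam ^ (2 * n))
    (heqA : ∀ m n, hA m n = (1 + u (hA m n, hB m n)) * (1 + δ (hA m n)) ^ (2 * m) * zA m)
    (heqB : ∀ m n, hB m n = (1 + u (hB m n, hA m n)) * (1 + δ (hB m n)) ^ (2 * n) * zB n)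
    (hlimA : Tendsto (fun mn : ℕ × ℕ => hA mn.1 mn.2) atTop (nhds 0))
    (hlimB : Tendsto (fun mn : ℕ × ℕ => hB mn.1 mn.2) atTop (nhds 0)) :
    ((fun mn : ℕ × ℕ => hA mn.1 mn.2 - zA mn.1)
        =o[atTop] fun mn : ℕ × ℕ => zA mn.1 + zB mn.2) ∧
      ((fun mn : ℕ × ℕ => hB mn.1 mn.2 - zB mn.2)
        =o[atTop] fun mn : ℕ × ℕ => zA mn.1 + zB mn.2) := by
  simp only [hzA, hzB] at heqA heqB ⊢
  have hlam_abs : |lam| < 1 := abs_lt.2 ⟨by linarith [hlam.1], hlam.2⟩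
  have hu_cont : Tendsto u (𝓝 (0, 0)) (𝓝 0) := by
    simpa [hu0] using hu.continuousAt.tendsto
  have hfst : Tendsto (Prod.fst : ℕ × ℕ → ℕ) atTop atTop :=
    tendsto_fst.mono_left prod_atTop_atTop_eq.ge
  have hsnd : Tendsto (Prod.snd : ℕ × ℕ → ℕ) atTop atTop :=
    tendsto_snd.mono_left prod_atTop_atTop_eq.ge
  have hA_small := isLittleO_sub_of_eq_mul_pow hlam_abs hfst hδ.differentiableAt hδ0
    (hu_cont.comp (hlimA.prodMk_nhds hlimB)) hlimA fun mn => heqA mn.1 mn.2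
  have hB_small := isLittleO_sub_of_eq_mul_pow hlam_abs hsnd hδ.differentiableAt hδ0
    (hu_cont.comp (hlimB.prodMk_nhds hlimA)) hlimB fun mn => heqB mn.1 mn.2
  have hz_nonneg (n : ℕ) : 0 ≤ xiInf ^ 2 * lam ^ (2 * n) :=
    mul_nonneg (sq_nonneg _) ((even_two_mul n).pow_nonneg lam)
  have hzA_le := isBigO_add_of_nonneg (l := atTop) (fun mn : ℕ × ℕ => hz_nonneg mn.1)
    fun mn => hz_nonneg mn.2
  have hzB_le := isBigO_add_of_nonneg (l := atTop) (fun mn : ℕ × ℕ => hz_nonneg mn.2)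
    fun mn => hz_nonneg mn.1
  exact ⟨hA_small.trans_isBigO hzA_le,
    hB_small.trans_isBigO (hzB_le.congr_right fun _ => add_comm _ _)⟩

/-- If `h_A, h_B` satisfy the implicit equations
`h_A = (1 + u(h_A,h_B))(1 + δ(h_A))^{2m} z_A` and
`h_B = (1 + u(h_B,h_A))(1 + δ(h_B))^{2n} z_B` with `u, δ` analytic vanishing at the origin,
`z_A = ξ∞²λ^{2m}`, `z_B = ξ∞²λ^{2n}`, `λ ∈ (0,1)`, and `h_A, h_B → 0`, then
`h_A = z_A + o(z_A + z_B)` and `h_B = z_B + o(z_A + z_B)` as `m, n → ∞`. -/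
theorem stmt_16 (xiInf lam : ℝ) (hxi : 0 < xiInf) (hlam : lam ∈ Set.Ioo (0 : ℝ) 1)
    (u : ℝ × ℝ → ℝ) (δ : ℝ → ℝ)
    (hu : AnalyticAt ℝ u (0, 0)) (hu0 : u (0, 0) = 0)
    (hδ : AnalyticAt ℝ δ 0) (hδ0 : δ 0 = 0)
    (hA hB : ℕ → ℕ → ℝ) (zA zB : ℕ → ℝ)
    (hzA : ∀ m, zA m = xiInf ^ 2 * lam ^ (2 * m))
    (hzB : ∀ n, zB n = xiInf ^ 2 * lam ^ (2 * n))
    (heqA : ∀ m n, hA m n = (1 + u (hA m n, hB m n)) * (1 + δ (hA m n)) ^ (2 * m) * zA m)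
    (heqB : ∀ m n, hB m n = (1 + u (hB m n, hA m n)) * (1 + δ (hB m n)) ^ (2 * n) * zB n)
    (hlimA : Tendsto (fun mn : ℕ × ℕ => hA mn.1 mn.2) atTop (nhds 0))
    (hlimB : Tendsto (fun mn : ℕ × ℕ => hB mn.1 mn.2) atTop (nhds 0)) :
    ((fun mn : ℕ × ℕ => hA mn.1 mn.2 - zA mn.1)
        =o[atTop] fun mn : ℕ × ℕ => zA mn.1 + zB mn.2) ∧
      ((fun mn : ℕ × ℕ => hB mn.1 mn.2 - zB mn.2)
        =o[atTop] fun mn : ℕ × ℕ => zA mn.1 + zB mn.2) :=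
  stmt_16_general xiInf lam hlam u δ hu hu0 hδ hδ0 hA hB zA zB hzA hzB heqA heqB hlimA hlimB
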